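/- arXiv:2308.09144 — 4 statements merged into one kernel-verified Lean document; each statement's English description precedes it below -/
import Mathlib

section
/- Let A be an n×n real matrix whose off-diagonal entries are all nonnegative, let g : [0,T] → ℝ^n be continuous with g(t)_i ≤ 0 for all i and all t ∈ [0,T], and let x : [0,T] → ℝ^n solve the linear ODE x'(t) = A x(t) + g(t) with x(0)_i ≤ 0 for all i. Then x(t)_i ≤ 0 for all i and all t ∈ [0,T]. -/
open Set Filter Topology Matrix

/-!
Maximum principle by a barrier argument. Choose `K` larger than every row sum of `A`; then
for each `ε > 0` the function `ε e^{Kt}` is a strict supersolution. At a first time when a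
coordinate `x_i` reaches it while all coordinates stay below, nonnegativity of the
off-diagonal entries bounds `x_i'` by `(∑_j A_ij) ε e^{Kt} < K ε e^{Kt}`, so `x_i` cannot
cross. Letting `ε → 0` gives `x ≤ 0`.
-/

theorem eventually_nhdsGT_nonpos_of_hasDerivWithinAt {h : ℝ → ℝ} {h' t : ℝ}
    (hh : HasDerivWithinAt h h' (Ici t) t) (ht : h t ≤ 0) (hcontact : h t = 0 → h' < 0) :
    ∀ᶠ z in 𝓝[>] t, h z ≤ 0 := by
  rcases ht.lt_or_eq with hneg | hzero
  · exact (hh.continuousWithinAt.eventually_lt_const hneg |>.filter_mono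
      (nhdsWithin_mono t Ioi_subset_Ici_self)).mono fun z hz => hz.le
  · filter_upwards [hh.Ioi_of_Ici.limsup_slope_le' (lt_irrefl t) (hcontact hzero),
      self_mem_nhdsWithin] with z hslope (hz : t < z)
    rw [slope_def_field, div_lt_iff₀ (sub_pos.2 hz)] at hslope
    linarith

theorem image_le_of_deriv_right_lt_deriv_boundary_pi {ι : Type*} [Fintype ι]
    {u u' : ℝ → ι → ℝ} {B B' : ℝ → ℝ} {a b : ℝ}
    (hu : ContinuousOn u (Icc a b)) (hu' : ∀ t ∈ Ico a b, HasDerivWithinAt u (u' t) (Ici t) t)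
    (ha : ∀ i, u a i ≤ B a) (hB : ContinuousOn B (Icc a b))
    (hB' : ∀ t ∈ Ico a b, HasDerivWithinAt B (B' t) (Ici t) t)
    (bound : ∀ t ∈ Ico a b, (∀ j, u t j ≤ B t) → ∀ i, u t i = B t → u' t i < B' t) :
    ∀ t ∈ Icc a b, ∀ i, u t i ≤ B t := by
  set s := {t | ∀ i, u t i ≤ B t}
  have hclosed : IsClosed (s ∩ Icc a b) := by
    convert isClosed_Icc.isClosed_le hu (continuousOn_pi.2 fun _ => hB) using 1
    ext t
    simp only [s, mem_inter_iff, mem_ofPred_eq, Pi.le_def, and_comm]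
  refine fun t ht => hclosed.Icc_subset_of_forall_mem_nhdsWithin ha ?_ ht
  rintro t ⟨hts, htab⟩
  refine eventually_all.2 fun i => ?_
  have hdiff := ((hasDerivWithinAt_pi.1 (hu' t htab)) i).sub (hB' t htab)
  filter_upwards [eventually_nhdsGT_nonpos_of_hasDerivWithinAt hdiff (sub_nonpos.2 (hts i))
    fun h => sub_neg.2 (bound t htab hts i (sub_eq_zero.1 h))] with z hz
  exact sub_nonpos.1 hz

theorem Matrix.mulVec_apply_le_of_le_of_eq {ι : Type*} [Fintype ι] {A : Matrix ι ι ℝ}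
    (hA : ∀ i j, i ≠ j → 0 ≤ A i j) {v : ι → ℝ} {c : ℝ} {i : ι} (hv : ∀ j, v j ≤ c)
    (hvi : v i = c) : (A *ᵥ v) i ≤ (∑ j, A i j) * c := by
  rw [Matrix.mulVec, dotProduct, Finset.sum_mul]
  refine Finset.sum_le_sum fun j _ => ?_
  rcases eq_or_ne i j with rfl | hij
  · rw [hvi]
  · exact mul_le_mul_of_nonneg_left (hv j) (hA i j hij)

theorem metzler_ode_comparison_general (n : ℕ) (T : ℝ)
    (A : Matrix (Fin n) (Fin n) ℝ)
    (hA : ∀ i j, i ≠ j → 0 ≤ A i j)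
    (g : ℝ → Fin n → ℝ)
    (hg : ∀ t ∈ Set.Icc (0:ℝ) T, ∀ i, g t i ≤ 0)
    (x : ℝ → Fin n → ℝ)
    (hx : ∀ t ∈ Set.Icc (0:ℝ) T, ∀ i,
      HasDerivWithinAt (fun s => x s i) (A.mulVec (x t) i + g t i) (Set.Icc 0 T) t)
    (hx0 : ∀ i, x 0 i ≤ 0) :
    ∀ t ∈ Set.Icc (0:ℝ) T, ∀ i, x t i ≤ 0 := by
  obtain ⟨K, hK⟩ : ∃ K, ∀ i, ∑ j, A i j < K := by
    obtain ⟨M, hM⟩ := (Set.finite_range fun i => ∑ j, A i j).bddAbove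
    exact ⟨M + 1, fun i => (hM ⟨i, rfl⟩).trans_lt (lt_add_one M)⟩
  have hxderiv (t : ℝ) (ht : t ∈ Icc (0:ℝ) T) :
      HasDerivWithinAt x (A *ᵥ x t + g t) (Icc 0 T) t :=
    hasDerivWithinAt_pi.2 (hx t ht)
  have hbarrier (ε : ℝ) (hε : 0 < ε) :
      ∀ t ∈ Icc (0:ℝ) T, ∀ i, x t i ≤ ε * Real.exp (K * t) := by
    have hB (t : ℝ) :
        HasDerivAt (fun s => ε * Real.exp (K * s)) (K * (ε * Real.exp (K * t))) t := by
      have := (((hasDerivAt_id t).const_mul K).exp).const_mul ε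
      simpa [mul_comm, mul_left_comm] using this
    refine image_le_of_deriv_right_lt_deriv_boundary_pi
      (fun t ht => (hxderiv t ht).continuousWithinAt)
      (fun t ht => (hxderiv t (Ico_subset_Icc_self ht)).mono_of_mem_nhdsWithin
        (Icc_mem_nhdsGE_of_mem ht))
      (fun i => (hx0 i).trans (by simp [hε.le]))
      (fun t _ => (hB t).continuousAt.continuousWithinAt)
      (fun t _ => (hB t).hasDerivWithinAt) ?_
    intro t ht hle i hi
    have hpos : 0 < ε * Real.exp (K * t) := by positivity
    calc (A *ᵥ x t + g t) i ≤ (∑ j, A i j) * (ε * Real.exp (K * t)) + 0 :=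
          add_le_add (A.mulVec_apply_le_of_le_of_eq hA hle hi) (hg t (Ico_subset_Icc_self ht) i)
      _ < K * (ε * Real.exp (K * t)) := by
          rw [add_zero]; exact mul_lt_mul_of_pos_right (hK i) hpos
  intro t ht i
  refine le_of_forall_pos_le_add fun δ hδ => ?_
  have := hbarrier (δ / Real.exp (K * t)) (by positivity) t ht i
  rwa [div_mul_cancel₀ _ (Real.exp_pos _).ne', ← zero_add δ] at this

/-- Maximum principle for linear ODE systems with Metzler matrices. -/
theorem metzler_ode_comparison (n : ℕ) (T : ℝ) (hT : 0 ≤ T)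
    (A : Matrix (Fin n) (Fin n) ℝ)
    (hA : ∀ i j, i ≠ j → 0 ≤ A i j)
    (g : ℝ → Fin n → ℝ)
    (hg_cont : ContinuousOn g (Set.Icc 0 T))
    (hg : ∀ t ∈ Set.Icc (0:ℝ) T, ∀ i, g t i ≤ 0)
    (x : ℝ → Fin n → ℝ)
    (hx : ∀ t ∈ Set.Icc (0:ℝ) T, ∀ i,
      HasDerivWithinAt (fun s => x s i) (A.mulVec (x t) i + g t i) (Set.Icc 0 T) t)
    (hx0 : ∀ i, x 0 i ≤ 0) :
    ∀ t ∈ Set.Icc (0:ℝ) T, ∀ i, x t i ≤ 0 :=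
  metzler_ode_comparison_general n T A hA g hg x hx hx0
end

section
/- Let (A, E) be a finite connected graph, let ∂A ⊆ A be a nonempty subset, and let c : E → ℝ be a strictly positive edge-weight function. Define the operator 𝓔 acting on functions f : A → ℝ by (𝓔 f)(η) = Σ_{{ξ,η} ∈ E} c(η,ξ)(f(ξ) − f(η)). If f : A → ℝ satisfies (𝓔 f)(x) = 0 for all x ∈ A \ ∂A, then max over x ∈ A of f(x) equals max over w ∈ ∂A of f(w), and min over x ∈ A of f(x) equals min over w ∈ ∂A of f(w). -/
open Finset

lemma boundary_attains_max {A : Type*} [Fintype A]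
    (G : SimpleGraph A) [DecidableRel G.Adj] (hconn : G.Connected)
    (B : Finset A) (hB : B.Nonempty)
    (c : A → A → ℝ) (hc : ∀ x y, G.Adj x y → 0 < c x y)
    (f : A → ℝ)
    (hf : ∀ x, x ∉ B →
      ∑ y ∈ Finset.univ.filter (fun y => G.Adj x y), c x y * (f y - f x) = 0)
    (M : ℝ) (hM : ∀ z, f z ≤ M) :
    ∀ x, f x = M → ∃ w ∈ B, f w = M := by
  obtain ⟨b, hb⟩ := hB
  have key : ∀ {x y} (_ : G.Walk x y), y ∈ B → f x = M → ∃ w ∈ B, f w = M := by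
    intro x y p
    induction p with
    | nil => intro hy hx; exact ⟨_, hy, hx⟩
    | @cons u v w hadj p ih =>
      intro hwB hu
      by_cases hmem : u ∈ B
      · exact ⟨u, hmem, hu⟩
      · apply ih hwB
        have hsum := hf u hmem
        have hnonpos : ∀ y ∈ Finset.univ.filter (fun y => G.Adj u y),
            c u y * (f y - f u) ≤ 0 := by
          intro y hy
          simp only [mem_filter, mem_univ, true_and] at hy
          have := hc u y hy
          nlinarith [hM y, hu]
        have hz := (Finset.sum_eq_zero_iff_of_nonpos hnonpos).mp hsum v
          (by simp [hadj])
        have hcv := hc u v hadj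
        have : f v = f u := by
          rcases mul_eq_zero.mp hz with h | h
          · exact absurd h (ne_of_gt hcv)
          · linarith
        rw [this, hu]
  intro x hx
  exact key ((hconn x b).some) hb hx

/-- Discrete maximum/minimum principle for harmonic functions of a weighted
graph operator on a finite connected graph with nonempty boundary. -/
theorem discrete_max_min_principle {A : Type*} [Fintype A] [Nonempty A]
    (G : SimpleGraph A) [DecidableRel G.Adj] (hconn : G.Connected)
    (B : Finset A) (hB : B.Nonempty)
    (c : A → A → ℝ) (hc : ∀ x y, G.Adj x y → 0 < c x y)
    (f : A → ℝ)
    (hf : ∀ x, x ∉ B →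
      ∑ y ∈ Finset.univ.filter (fun y => G.Adj x y), c x y * (f y - f x) = 0) :
    Finset.univ.sup' Finset.univ_nonempty f = B.sup' hB f ∧
    Finset.univ.inf' Finset.univ_nonempty f = B.inf' hB f := by
  constructor
  · obtain ⟨x₀, -, hx₀⟩ := Finset.exists_mem_eq_sup' Finset.univ_nonempty f
    have hM : ∀ z, f z ≤ f x₀ := by
      intro z; rw [← hx₀]; exact Finset.le_sup' f (mem_univ z)
    obtain ⟨w, hw, hfw⟩ :=
      boundary_attains_max G hconn B ⟨_, hB.choose_spec⟩ c hc f hf (f x₀) hM x₀ rfl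
    apply le_antisymm
    · rw [hx₀, ← hfw]; exact Finset.le_sup' f hw
    · exact Finset.sup'_mono f (Finset.subset_univ B) hB
  · obtain ⟨x₀, -, hx₀⟩ := Finset.exists_mem_eq_inf' Finset.univ_nonempty f
    have hM : ∀ z, -f z ≤ -f x₀ := by
      intro z
      have : f x₀ ≤ f z := by rw [← hx₀]; exact Finset.inf'_le f (mem_univ z)
      linarith
    have hf' : ∀ x, x ∉ B →
        ∑ y ∈ Finset.univ.filter (fun y => G.Adj x y),
          c x y * ((-f) y - (-f) x) = 0 := by
      intro x hx
      have h0 := hf x hx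
      have : ∑ y ∈ Finset.univ.filter (fun y => G.Adj x y),
          c x y * ((-f) y - (-f) x)
          = -∑ y ∈ Finset.univ.filter (fun y => G.Adj x y),
              c x y * (f y - f x) := by
        rw [← Finset.sum_neg_distrib]
        apply Finset.sum_congr rfl
        intro y _; simp; ring
      rw [this, h0, neg_zero]
    obtain ⟨w, hw, hfw⟩ := boundary_attains_max G hconn B hB c hc (-f) hf'
      (-f x₀) hM x₀ rfl
    apply le_antisymm
    · exact Finset.inf'_mono f (Finset.subset_univ B) hB
    · rw [hx₀]
      have : f w = f x₀ := by
        have := hfw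
        simp only [Pi.neg_apply, neg_inj] at this
        exact this
      rw [← this]
      exact Finset.inf'_le f hw
end

section
/- Let (A, E) be a finite connected graph, ∂A ⊆ A nonempty, c : E → ℝ strictly positive, and 𝓔 the operator (𝓔 f)(η) = Σ_{{ξ,η} ∈ E} c(η,ξ)(f(ξ) − f(η)). If f : A → ℝ satisfies (𝓔 f)(x) ≥ 0 for all x ∈ A \ ∂A and f(w) = 0 for all w ∈ ∂A, then f(x) ≤ 0 for all x ∈ A. -/
open Finset

/-- Discrete maximum principle: subharmonic functions vanishing on the boundary
of a finite connected weighted graph are nonpositive. -/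
theorem discrete_subharmonic_max_principle {A : Type*} [Fintype A] [Nonempty A]
    (G : SimpleGraph A) [DecidableRel G.Adj] (hconn : G.Connected)
    (B : Finset A) (hB : B.Nonempty)
    (c : A → A → ℝ) (hc : ∀ x y, G.Adj x y → 0 < c x y)
    (f : A → ℝ)
    (hf : ∀ x, x ∉ B →
      0 ≤ ∑ y ∈ Finset.univ.filter (fun y => G.Adj x y), c x y * (f y - f x))
    (hf0 : ∀ w ∈ B, f w = 0) :
    ∀ x, f x ≤ 0 := by
  obtain ⟨x0, -, hx0⟩ := Finset.exists_mem_eq_sup' Finset.univ_nonempty f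
  set M := Finset.univ.sup' Finset.univ_nonempty f with hM
  by_cases hMpos : M ≤ 0
  · intro x; exact le_trans (Finset.le_sup' f (Finset.mem_univ x)) hMpos
  push_neg at hMpos
  exfalso
  obtain ⟨w, hw⟩ := hB
  have step : ∀ x y, f x = M → G.Adj x y → f y = M := by
    intro x y hx hxy
    have hxB : x ∉ B := fun h => by
      have := hf0 x h; rw [this] at hx; linarith
    have hsum := hf x hxB
    have hle : ∀ z ∈ Finset.univ.filter (fun z => G.Adj x z),
        c x z * (f z - f x) ≤ 0 := by
      intro z hz
      simp only [Finset.mem_filter] at hz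
      have h1 : f z ≤ M := Finset.le_sup' f (Finset.mem_univ z)
      have hcz := hc x z hz.2
      nlinarith
    have hzero := (Finset.sum_eq_zero_iff_of_nonpos hle).mp
      (le_antisymm (Finset.sum_nonpos hle) hsum) y (by simp [hxy])
    have hcy := hc x y hxy
    have : f y - f x = 0 := by
      rcases mul_eq_zero.mp hzero with h | h
      · linarith
      · exact h
    linarith
  have walkprop : ∀ {u v : A} (_ : G.Walk u v), f u = M → f v = M := by
    intro u v p
    induction p with
    | nil => exact id
    | cons h p ih => intro hu; exact ih (step _ _ hu h)
  obtain ⟨p⟩ := hconn.preconnected x0 w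
  have := walkprop p hx0.symm
  have := hf0 w hw
  linarith
end

section
/- Fix integers N ≥ 3 and α ≥ 1 with αN > 1. Let V_N = {(x,y) ∈ ℤ² : 1 ≤ x ≤ y ≤ N−1} and define T : ℤ² → ℝ by T(x,y) = (N−y)x/(N²(αN−1)) − 1/(2N(αN−1)) if y = x, T(x,y) = (N−y)x/(N²(αN−1)) if y ≠ x with (x,y) ∈ V_N, extended symmetrically by T(x,y) = T(y,x) for x > y, and T(x,y) = 0 whenever x ∈ {0,N} or y ∈ {0,N}. Define the operator on V_N: for (x,y) ∈ V_N with y ≥ x+2, (L T)(x,y) = α[T(x−1,y) + T(x+1,y) + T(x,y−1) + T(x,y+1) − 4T(x,y)]; for y = x+1, (L T)(x,x+1) = α[T(x−1,x+1) + T(x,x+2)] + (α−1)[T(x,x) + T(x+1,x+1)] − (4α−2)T(x,x+1); for y = x, (L T)(x,x) = 2α[T(x−1,x) + T(x,x+1) − 2T(x,x)]. Then N²(L T)(x,y) = −1 if y = x+1 and N²(L T)(x,y) = 0 for every other (x,y) ∈ V_N. -/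
/-!
Off the diagonal, `T` is the Green's function `(N - y) x / (N² κ)` with `κ = αN - 1`, and this
formula also vanishes on the absorbing lines `x = 0`, `y = N`. Being bilinear it is discretely
harmonic, so the equation holds in the bulk. On and next to the diagonal only two second
differences of this formula remain: twice the correction `1/(2Nκ)` subtracted on the diagonal
cancels the kink `-1/(Nκ)` of the formula across the diagonal; and next to the diagonal the jump
`(N - 1)/(N² κ)` together with the weakened rates `α - 1` adds up to `(αN - 1)/(N² κ) = 1/N²`.
-/

noncomputable def green (N κ x y : ℝ) : ℝ := (N - y) * x / (N ^ 2 * κ)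

theorem green_laplacian (N κ x y : ℝ) :
    green N κ (x - 1) y + green N κ (x + 1) y + green N κ x (y - 1) + green N κ x (y + 1)
      - 4 * green N κ x y = 0 := by
  unfold green
  ring

theorem green_diag_jump (N κ x : ℝ) :
    green N κ x x + green N κ (x + 1) (x + 1) - 2 * green N κ x (x + 1)
      = (N - 1) / (N ^ 2 * κ) := by
  unfold green
  ring

theorem green_diag_kink {N : ℝ} (hN : N ≠ 0) (κ x : ℝ) :
    green N κ (x - 1) x + green N κ x (x + 1) - 2 * green N κ x x = -1 / (N * κ) := by
  unfold green
  field_simp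
  ring

theorem sq_mul_jump_add_defect_eq_one {N α κ : ℝ} (hN : N ≠ 0) (hκ : κ = α * N - 1)
    (hκ0 : κ ≠ 0) : N ^ 2 * ((N - 1) / (N ^ 2 * κ) + (α - 1) / (N * κ)) = 1 := by
  field_simp
  linear_combination -hκ

theorem eq_green_of_lt {N : ℕ} {κ : ℝ} {T : ℤ → ℤ → ℝ}
    (hoff : ∀ x y : ℤ, 1 ≤ x → x ≤ y → y ≤ (N : ℤ) - 1 → x ≠ y → T x y = green N κ x y)
    (hbdry : ∀ x y : ℤ, (x = 0 ∨ x = (N : ℤ) ∨ y = 0 ∨ y = (N : ℤ)) → T x y = 0)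
    {x y : ℤ} (hx : 0 ≤ x) (hxy : x < y) (hy : y ≤ N) : T x y = green N κ x y := by
  obtain rfl | hx := hx.eq_or_lt
  · simp [hbdry 0 y (Or.inl rfl), green]
  obtain rfl | hy := hy.eq_or_lt
  · simp [hbdry x N (by simp), green]
  exact hoff x y hx hxy.le (by omega) hxy.ne

theorem occupation_time_poisson_general (N α : ℕ) (hαN : 1 < α * N)
    (T : ℤ → ℤ → ℝ)
    (hTdiag : ∀ x : ℤ, 1 ≤ x → x ≤ (N : ℤ) - 1 →
      T x x = ((N : ℝ) - x) * x / ((N : ℝ) ^ 2 * ((α : ℝ) * N - 1))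
        - 1 / (2 * (N : ℝ) * ((α : ℝ) * N - 1)))
    (hToff : ∀ x y : ℤ, 1 ≤ x → x ≤ y → y ≤ (N : ℤ) - 1 → x ≠ y →
      T x y = ((N : ℝ) - y) * x / ((N : ℝ) ^ 2 * ((α : ℝ) * N - 1)))
    (hTbdry : ∀ x y : ℤ, (x = 0 ∨ x = (N : ℤ) ∨ y = 0 ∨ y = (N : ℤ)) → T x y = 0) :
    (∀ x y : ℤ, 1 ≤ x → x + 2 ≤ y → y ≤ (N : ℤ) - 1 →
      (N : ℝ) ^ 2 * ((α : ℝ) * (T (x - 1) y + T (x + 1) y + T x (y - 1) + T x (y + 1)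
        - 4 * T x y)) = 0) ∧
    (∀ x : ℤ, 1 ≤ x → x + 1 ≤ (N : ℤ) - 1 →
      (N : ℝ) ^ 2 * ((α : ℝ) * (T (x - 1) (x + 1) + T x (x + 2))
        + ((α : ℝ) - 1) * (T x x + T (x + 1) (x + 1))
        - (4 * (α : ℝ) - 2) * T x (x + 1)) = -1) ∧
    (∀ x : ℤ, 1 ≤ x → x ≤ (N : ℤ) - 1 →
      (N : ℝ) ^ 2 * (2 * (α : ℝ) * (T (x - 1) x + T x (x + 1) - 2 * T x x)) = 0) := by
  set κ : ℝ := α * N - 1 with hκ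
  have hN : (N : ℝ) ≠ 0 := Nat.cast_ne_zero.mpr (by rintro rfl; simp at hαN)
  have hκ0 : κ ≠ 0 := sub_ne_zero.mpr (by exact_mod_cast hαN.ne')
  have hdiag : ∀ x : ℤ, 1 ≤ x → x ≤ (N : ℤ) - 1 →
      T x x = green N κ x x - 1 / (2 * N * κ) := hTdiag
  have hT : ∀ x y : ℤ, 0 ≤ x → x < y → y ≤ N → T x y = green N κ x y :=
    fun _ _ => eq_green_of_lt hToff hTbdry
  clear_value κ
  refine ⟨fun x y hx hxy hy => ?_, fun x hx hxN => ?_, fun x hx hxN => ?_⟩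
  · rw [hT (x - 1) y (by omega) (by omega) (by omega),
      hT (x + 1) y (by omega) (by omega) (by omega), hT x (y - 1) (by omega) (by omega) (by omega),
      hT x (y + 1) (by omega) (by omega) (by omega), hT x y (by omega) (by omega) (by omega)]
    push_cast
    linear_combination (N ^ 2 * α : ℝ) * green_laplacian N κ x y
  · rw [hT (x - 1) (x + 1) (by omega) (by omega) (by omega),
      hT x (x + 2) (by omega) (by omega) (by omega), hdiag x hx (by omega),
      hdiag (x + 1) (by omega) (by omega), hT x (x + 1) (by omega) (by omega) (by omega)]
    push_cast
    -- `ring_nf` also normalises the arguments `x + 1 - 1`, `x + 1 + 1` of `green`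
    linear_combination (norm := ring_nf) (N ^ 2 * α : ℝ) * green_laplacian N κ x (x + 1)
      - (N : ℝ) ^ 2 * green_diag_jump N κ x - sq_mul_jump_add_defect_eq_one hN hκ hκ0
  · rw [hT (x - 1) x (by omega) (by omega) (by omega),
      hT x (x + 1) (by omega) (by omega) (by omega), hdiag x hx hxN]
    push_cast
    linear_combination (2 * N ^ 2 * α : ℝ) * green_diag_kink hN κ x

/-- The explicit occupation-time function solves the discrete Poisson equation
N²ΔT = -1_{y=x+1} on the triangle V_N with absorption on the boundary. -/
theorem occupation_time_poisson (N α : ℕ) (hN : 3 ≤ N) (hα : 1 ≤ α) (hαN : 1 < α * N)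
    (T : ℤ → ℤ → ℝ)
    (hTdiag : ∀ x : ℤ, 1 ≤ x → x ≤ (N : ℤ) - 1 →
      T x x = ((N : ℝ) - x) * x / ((N : ℝ) ^ 2 * ((α : ℝ) * N - 1))
        - 1 / (2 * (N : ℝ) * ((α : ℝ) * N - 1)))
    (hToff : ∀ x y : ℤ, 1 ≤ x → x ≤ y → y ≤ (N : ℤ) - 1 → x ≠ y →
      T x y = ((N : ℝ) - y) * x / ((N : ℝ) ^ 2 * ((α : ℝ) * N - 1)))
    (hTsym : ∀ x y : ℤ, T x y = T y x)
    (hTbdry : ∀ x y : ℤ, (x = 0 ∨ x = (N : ℤ) ∨ y = 0 ∨ y = (N : ℤ)) → T x y = 0) :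
    (∀ x y : ℤ, 1 ≤ x → x + 2 ≤ y → y ≤ (N : ℤ) - 1 →
      (N : ℝ) ^ 2 * ((α : ℝ) * (T (x - 1) y + T (x + 1) y + T x (y - 1) + T x (y + 1)
        - 4 * T x y)) = 0) ∧
    (∀ x : ℤ, 1 ≤ x → x + 1 ≤ (N : ℤ) - 1 →
      (N : ℝ) ^ 2 * ((α : ℝ) * (T (x - 1) (x + 1) + T x (x + 2))
        + ((α : ℝ) - 1) * (T x x + T (x + 1) (x + 1))
        - (4 * (α : ℝ) - 2) * T x (x + 1)) = -1) ∧
    (∀ x : ℤ, 1 ≤ x → x ≤ (N : ℤ) - 1 →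
      (N : ℝ) ^ 2 * (2 * (α : ℝ) * (T (x - 1) x + T x (x + 1) - 2 * T x x)) = 0) :=
  occupation_time_poisson_general N α hαN T hTdiag hToff hTbdry
end
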